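/- Let A be an algebra and R, S, T reflexive compatible binary relations on A. Then [R, S∘T|1] ⊆ ((R⁻∘R) ∩ ((S ∩ (R⁻ ∘ (S ∩ T⁻) ∘ R)) ∘ (T ∩ (R⁻ ∘ (S⁻ ∩ T) ∘ R))))*. -/

import Mathlib

open FirstOrder Language

universe u

/-- A binary relation on a structure `A` is compatible (admissible) if it is preserved
by every operation (function symbol) of the language. -/
def Compatible (L : Language) {A : Type u} [L.Structure A] (R : A → A → Prop) : Prop :=
  ∀ (n : ℕ) (f : L.Functions n) (a b : Fin n → A),
    (∀ i, R (a i) (b i)) → R (Structure.funMap f a) (Structure.funMap f b)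

/-- `(x, y; z, w) ∈ M(R, S)`: there is a term `t` and tuples `a R a'`, `b S b'` with
`x = t(a,b)`, `y = t(a,b')`, `z = t(a',b)`, `w = t(a',b')`. -/
def InM (L : Language) {A : Type u} [L.Structure A] (R S : A → A → Prop)
    (x y z w : A) : Prop :=
  ∃ (n m : ℕ) (t : L.Term (Fin n ⊕ Fin m)) (a a' : Fin n → A) (b b' : Fin m → A),
    (∀ i, R (a i) (a' i)) ∧ (∀ j, S (b j) (b' j)) ∧
      x = t.realize (Sum.elim a b) ∧ y = t.realize (Sum.elim a b') ∧
      z = t.realize (Sum.elim a' b) ∧ w = t.realize (Sum.elim a' b')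

/-- `[R, S | 1]`: the transitive closure of `{(z,w) : (x,x;z,w) ∈ M(R,S) for some x}`. -/
def comm1 (L : Language) {A : Type u} [L.Structure A] (R S : A → A → Prop) :
    A → A → Prop :=
  Relation.TransGen (fun z w => ∃ x, InM L R S x x z w)

/-- Relational composition. -/
def rcomp {A : Type u} (R S : A → A → Prop) : A → A → Prop :=
  fun a c => ∃ b, R a b ∧ S b c

/-- Converse of a relation. -/
def rconv {A : Type u} (R : A → A → Prop) : A → A → Prop := fun a b => R b a

/-- Intersection of relations. -/
def rinter {A : Type u} (R S : A → A → Prop) : A → A → Prop := fun a b => R a b ∧ S a b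

/-- A congruence: a compatible equivalence relation. -/
def IsCongruence (L : Language) {A : Type u} [L.Structure A] (θ : A → A → Prop) : Prop :=
  Equivalence θ ∧ Compatible L θ

/-- A tolerance: a reflexive symmetric compatible relation. -/
def IsTolerance (L : Language) {A : Type u} [L.Structure A] (T : A → A → Prop) : Prop :=
  Reflexive T ∧ Symmetric T ∧ Compatible L T

/-- `Cg R`: the smallest congruence containing `R` (intersection of all congruences ⊇ R). -/
def Cg (L : Language) {A : Type u} [L.Structure A] (R : A → A → Prop) : A → A → Prop :=
  fun a b => ∀ θ : A → A → Prop, IsCongruence L θ → (∀ x y, R x y → θ x y) → θ a b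

/-- `R°`: the smallest tolerance containing `R`. -/
def tolC (L : Language) {A : Type u} [L.Structure A] (R : A → A → Prop) : A → A → Prop :=
  fun a b => ∀ T : A → A → Prop, IsTolerance L T → (∀ x y, R x y → T x y) → T a b

/-- `K(R,S;V) = {(z,w) : ∃ x y, (x,y;z,w) ∈ M(R,S) ∧ x V y}`. -/
def Kop (L : Language) {A : Type u} [L.Structure A] (R S V : A → A → Prop) :
    A → A → Prop :=
  fun z w => ∃ x y, InM L R S x y z w ∧ V x y

/-- The join `γ ∨ D`: the smallest congruence containing both `γ` and `D`. -/
def cgJoin (L : Language) {A : Type u} [L.Structure A] (γ D : A → A → Prop) :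
    A → A → Prop :=
  fun a b => ∀ θ : A → A → Prop, IsCongruence L θ → (∀ x y, γ x y → θ x y) →
    (∀ x y, D x y → θ x y) → θ a b

variable {L : Language} {A : Type u} [L.Structure A]

/-!
A generating pair of `[R, S∘T|1]` is `(t(a',b), t(a',b'))` for a term `t` with `a R a'`,
`b S c T b'` and `t(a,b) = t(a,b')`. Both coordinates are `R`-related to `t(a,b) = t(a,b')`, and
through `t(a',c)` the pair splits into an `S`-step and a `T`-step. The identification
`t(a,b) = t(a,b')` is what turns `t(a,b) S t(a,c) T t(a,b')` into the converse links
`S ∩ T⁻` and `S⁻ ∩ T` between `t(a,b)` and `t(a,c)`.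
-/

namespace Compatible

variable {R : A → A → Prop}

theorem realize (hR : Compatible L R) {α : Type*} (t : L.Term α) {v w : α → A}
    (h : ∀ i, R (v i) (w i)) : R (t.realize v) (t.realize w) := by
  induction t with
  | var i => exact h i
  | func f ts ih => exact hR _ f _ _ ih

theorem realize_sumElim_left (hR : Compatible L R) (hRrefl : Reflexive R) {α β : Type*}
    (t : L.Term (α ⊕ β)) {a a' : α → A} (ha : ∀ i, R (a i) (a' i)) (b : β → A) :
    R (t.realize (Sum.elim a b)) (t.realize (Sum.elim a' b)) :=
  hR.realize t (Sum.forall.2 ⟨ha, fun _ => hRrefl _⟩)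

theorem realize_sumElim_right (hR : Compatible L R) (hRrefl : Reflexive R) {α β : Type*}
    (t : L.Term (α ⊕ β)) (a : α → A) {b b' : β → A} (hb : ∀ j, R (b j) (b' j)) :
    R (t.realize (Sum.elim a b)) (t.realize (Sum.elim a b')) :=
  hR.realize t (Sum.forall.2 ⟨fun _ => hRrefl _, hb⟩)

end Compatible

section Generator

variable {R S T : A → A → Prop} {α β : Type*} (t : L.Term (α ⊕ β)) {a a' : α → A}
  {b c b' : β → A}

theorem rcomp_rconv_realize_of_realize_eq (hRrefl : Reflexive R) (hRc : Compatible L R)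
    (ha : ∀ i, R (a i) (a' i)) (hx : t.realize (Sum.elim a b) = t.realize (Sum.elim a b')) :
    rcomp (rconv R) R (t.realize (Sum.elim a' b)) (t.realize (Sum.elim a' b')) :=
  ⟨_, hRc.realize_sumElim_left hRrefl t ha b, hx ▸ hRc.realize_sumElim_left hRrefl t ha b'⟩

theorem first_factor_realize_of_realize_eq (hRrefl : Reflexive R) (hSrefl : Reflexive S)
    (hTrefl : Reflexive T) (hRc : Compatible L R) (hSc : Compatible L S)
    (hTc : Compatible L T) (ha : ∀ i, R (a i) (a' i)) (hbc : ∀ j, S (b j) (c j))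
    (hcb : ∀ j, T (c j) (b' j)) (hx : t.realize (Sum.elim a b) = t.realize (Sum.elim a b')) :
    rinter S (rcomp (rconv R) (rcomp (rinter S (rconv T)) R))
      (t.realize (Sum.elim a' b)) (t.realize (Sum.elim a' c)) :=
  ⟨hSc.realize_sumElim_right hSrefl t a' hbc, _, hRc.realize_sumElim_left hRrefl t ha b, _,
    ⟨hSc.realize_sumElim_right hSrefl t a hbc, hx ▸ hTc.realize_sumElim_right hTrefl t a hcb⟩,
    hRc.realize_sumElim_left hRrefl t ha c⟩

theorem second_factor_realize_of_realize_eq (hRrefl : Reflexive R) (hSrefl : Reflexive S)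
    (hTrefl : Reflexive T) (hRc : Compatible L R) (hSc : Compatible L S)
    (hTc : Compatible L T) (ha : ∀ i, R (a i) (a' i)) (hbc : ∀ j, S (b j) (c j))
    (hcb : ∀ j, T (c j) (b' j)) (hx : t.realize (Sum.elim a b) = t.realize (Sum.elim a b')) :
    rinter T (rcomp (rconv R) (rcomp (rinter (rconv S) T) R))
      (t.realize (Sum.elim a' c)) (t.realize (Sum.elim a' b')) :=
  ⟨hTc.realize_sumElim_right hTrefl t a' hcb, _, hRc.realize_sumElim_left hRrefl t ha c, _,
    ⟨hx ▸ hSc.realize_sumElim_right hSrefl t a hbc, hTc.realize_sumElim_right hTrefl t a hcb⟩,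
    hRc.realize_sumElim_left hRrefl t ha b'⟩

end Generator

theorem stmt8 (R S T : A → A → Prop)
    (hRrefl : Reflexive R) (hSrefl : Reflexive S) (hTrefl : Reflexive T)
    (hRc : Compatible L R) (hSc : Compatible L S) (hTc : Compatible L T) :
    ∀ a b, comm1 L R (rcomp S T) a b →
      Relation.TransGen
        (rinter (rcomp (rconv R) R)
          (rcomp (rinter S (rcomp (rconv R) (rcomp (rinter S (rconv T)) R)))
                 (rinter T (rcomp (rconv R) (rcomp (rinter (rconv S) T) R))))) a b := by
  intro _ _ h
  refine Relation.TransGen.mono ?_ _ _ h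
  rintro _ _ ⟨_, n, m, t, a, a', b, b', ha, hST, hxb, hxb', rfl, rfl⟩
  choose c hbc hcb using hST
  have hx : t.realize (Sum.elim a b) = t.realize (Sum.elim a b') := hxb.symm.trans hxb'
  exact ⟨rcomp_rconv_realize_of_realize_eq t hRrefl hRc ha hx, _,
    first_factor_realize_of_realize_eq t hRrefl hSrefl hTrefl hRc hSc hTc ha hbc hcb hx,
    second_factor_realize_of_realize_eq t hRrefl hSrefl hTrefl hRc hSc hTc ha hbc hcb hx⟩
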